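/- (Closeness of the modified energy to the quadratic part.) Assume |ψ₁(ξ)| ≤ c₀ and |φ(ξ)| ≤ c₀ for all ξ ∈ ℝ. Then for all q, q̇ ∈ ℂ^d and 0 < h ≤ 1: |ℋ(q, q̇) − (1/2)‖Ω q‖² − (1/2)‖q̇‖²| ≤ (C̆ + Ĉ h²)‖q‖², where C̆ = (1/2) c₀² ‖A‖ and Ĉ = (1/8) c₀⁴ ‖A‖², ‖A‖ being the operator norm. -/

import Mathlib

open scoped BigOperators

/-- `sinc ξ = sin ξ / ξ` with `sinc 0 = 1`. -/
noncomputable def sinc (x : ℝ) : ℝ := if x = 0 then 1 else Real.sin x / x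

/-- Entrywise (diagonal-matrix) action of a real function family on `ℂ^d`. -/
noncomputable def dOp {d : ℕ} (f : Fin d → ℝ) (q : EuclideanSpace ℂ (Fin d)) :
    EuclideanSpace ℂ (Fin d) := WithLp.toLp 2 (fun i => (f i : ℂ) * q i)

/-- Position update of the trigonometric integrator for the linear force `g(q) = -A q`:
`q_{n+1} = cos(hΩ) q_n + h sinc(hΩ) q̇_n + ½h² sinc(hΩ) Ψ₁ g(Φ q_n)`. -/
noncomputable def trigStepQ {d : ℕ} (h : ℝ) (ω : Fin d → ℝ) (ψ₁ φ : ℝ → ℝ)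
    (A : EuclideanSpace ℂ (Fin d) →L[ℂ] EuclideanSpace ℂ (Fin d))
    (q p : EuclideanSpace ℂ (Fin d)) : EuclideanSpace ℂ (Fin d) :=
  dOp (fun i => Real.cos (h * ω i)) q + h • dOp (fun i => sinc (h * ω i)) p
    + (h ^ 2 / 2) • dOp (fun i => sinc (h * ω i))
        (dOp (fun i => ψ₁ (h * ω i)) (-(A (dOp (fun i => φ (h * ω i)) q))))

/-- Velocity update of the trigonometric integrator for the linear force `g(q) = -A q`:
`q̇_{n+1} = -Ω sin(hΩ) q_n + cos(hΩ) q̇_n + ½h (cos(hΩ) Ψ₁ g(Φ q_n) + Ψ₁ g(Φ q_{n+1}))`. -/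
noncomputable def trigStepP {d : ℕ} (h : ℝ) (ω : Fin d → ℝ) (ψ₁ φ : ℝ → ℝ)
    (A : EuclideanSpace ℂ (Fin d) →L[ℂ] EuclideanSpace ℂ (Fin d))
    (q p : EuclideanSpace ℂ (Fin d)) : EuclideanSpace ℂ (Fin d) :=
  -(dOp (fun i => ω i * Real.sin (h * ω i)) q) + dOp (fun i => Real.cos (h * ω i)) p
    + (h / 2) • (dOp (fun i => Real.cos (h * ω i))
          (dOp (fun i => ψ₁ (h * ω i)) (-(A (dOp (fun i => φ (h * ω i)) q))))
        + dOp (fun i => ψ₁ (h * ω i))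
            (-(A (dOp (fun i => φ (h * ω i)) (trigStepQ h ω ψ₁ φ A q p)))))

/-- The modified energy
`ℋ(q,q̇) = ½‖Ωq‖² + ½‖q̇‖² + ½ Re((cos(hΩ)Φq)* A Φq) − ⅛h²‖Ψ₁ A Φq‖²`. -/
noncomputable def modEnergy {d : ℕ} (h : ℝ) (ω : Fin d → ℝ) (ψ₁ φ : ℝ → ℝ)
    (A : EuclideanSpace ℂ (Fin d) →L[ℂ] EuclideanSpace ℂ (Fin d))
    (q p : EuclideanSpace ℂ (Fin d)) : ℝ :=
  (1 / 2) * ‖dOp ω q‖ ^ 2 + (1 / 2) * ‖p‖ ^ 2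
    + (1 / 2) * (inner (𝕜 := ℂ) (dOp (fun i => Real.cos (h * ω i)) (dOp (fun i => φ (h * ω i)) q))
        (A (dOp (fun i => φ (h * ω i)) q))).re
    - (1 / 8) * h ^ 2 * ‖dOp (fun i => ψ₁ (h * ω i)) (A (dOp (fun i => φ (h * ω i)) q))‖ ^ 2

/-- The total energy `H(q,q̇) = ½‖Ωq‖² + ½‖q̇‖² + ½ q* A q` of `q̈ = -Ω²q - Aq`. -/
noncomputable def energy {d : ℕ} (ω : Fin d → ℝ)
    (A : EuclideanSpace ℂ (Fin d) →L[ℂ] EuclideanSpace ℂ (Fin d))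
    (q p : EuclideanSpace ℂ (Fin d)) : ℝ :=
  (1 / 2) * ‖dOp ω q‖ ^ 2 + (1 / 2) * ‖p‖ ^ 2 + (1 / 2) * (inner (𝕜 := ℂ) q (A q)).re

theorem norm_dOp_le {d : ℕ} {f : Fin d → ℝ} {c : ℝ} (hc : 0 ≤ c) (hf : ∀ i, |f i| ≤ c)
    (q : EuclideanSpace ℂ (Fin d)) : ‖dOp f q‖ ≤ c * ‖q‖ := by
  have hsq : ‖dOp f q‖ ^ 2 ≤ (c * ‖q‖) ^ 2 := by
    rw [EuclideanSpace.norm_sq_eq, mul_pow, EuclideanSpace.norm_sq_eq, Finset.mul_sum]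
    refine Finset.sum_le_sum fun i _ => ?_
    simp only [dOp, PiLp.toLp_apply, norm_mul, Complex.norm_real, Real.norm_eq_abs, mul_pow]
    gcongr
    exact hf i
  exact le_of_sq_le_sq hsq (by positivity)

theorem abs_re_inner_dOp_le {d : ℕ} {f : Fin d → ℝ} (hf : ∀ i, |f i| ≤ 1)
    (A : EuclideanSpace ℂ (Fin d) →L[ℂ] EuclideanSpace ℂ (Fin d)) (x : EuclideanSpace ℂ (Fin d)) :
    |(inner (𝕜 := ℂ) (dOp f x) (A x)).re| ≤ ‖A‖ * ‖x‖ ^ 2 :=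
  calc |(inner (𝕜 := ℂ) (dOp f x) (A x)).re|
      ≤ ‖dOp f x‖ * ‖A x‖ := (Complex.abs_re_le_norm _).trans (norm_inner_le_norm _ _)
    _ ≤ (1 * ‖x‖) * (‖A‖ * ‖x‖) := by
      gcongr
      exacts [norm_dOp_le zero_le_one hf x, A.le_opNorm x]
    _ = ‖A‖ * ‖x‖ ^ 2 := by ring

theorem modEnergy_sub_quadratic {d : ℕ} (h : ℝ) (ω : Fin d → ℝ) (ψ₁ φ : ℝ → ℝ)
    (A : EuclideanSpace ℂ (Fin d) →L[ℂ] EuclideanSpace ℂ (Fin d))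
    (q p : EuclideanSpace ℂ (Fin d)) :
    modEnergy h ω ψ₁ φ A q p - (1 / 2) * ‖dOp ω q‖ ^ 2 - (1 / 2) * ‖p‖ ^ 2
      = (1 / 2) * (inner (𝕜 := ℂ) (dOp (fun i => Real.cos (h * ω i))
            (dOp (fun i => φ (h * ω i)) q)) (A (dOp (fun i => φ (h * ω i)) q))).re
        - (1 / 8) * h ^ 2 * ‖dOp (fun i => ψ₁ (h * ω i)) (A (dOp (fun i => φ (h * ω i)) q))‖ ^ 2 := by
  rw [modEnergy]
  ring

theorem modified_energy_close_to_quadratic_part_general {d : ℕ} (h : ℝ)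
    (ω : Fin d → ℝ) (ψ₁ φ : ℝ → ℝ) (c₀ : ℝ)
    (hψ : ∀ ξ : ℝ, |ψ₁ ξ| ≤ c₀) (hφ : ∀ ξ : ℝ, |φ ξ| ≤ c₀)
    (A : EuclideanSpace ℂ (Fin d) →L[ℂ] EuclideanSpace ℂ (Fin d)) :
    ∀ q p : EuclideanSpace ℂ (Fin d),
      |modEnergy h ω ψ₁ φ A q p - (1 / 2) * ‖dOp ω q‖ ^ 2 - (1 / 2) * ‖p‖ ^ 2|
        ≤ ((1 / 2) * c₀ ^ 2 * ‖A‖ + (1 / 8) * c₀ ^ 4 * ‖A‖ ^ 2 * h ^ 2) * ‖q‖ ^ 2 := by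
  intro q p
  rw [modEnergy_sub_quadratic]
  have hc₀ : 0 ≤ c₀ := (abs_nonneg _).trans (hψ 0)
  set x := dOp (fun i => φ (h * ω i)) q
  have hx : ‖x‖ ≤ c₀ * ‖q‖ := norm_dOp_le hc₀ (fun i => hφ _) q
  have hcos := abs_re_inner_dOp_le (fun i => Real.abs_cos_le_one (h * ω i)) A x
  have hψAx : ‖dOp (fun i => ψ₁ (h * ω i)) (A x)‖ ≤ c₀ * (‖A‖ * ‖x‖) :=
    (norm_dOp_le hc₀ (fun i => hψ _) (A x)).trans
      (mul_le_mul_of_nonneg_left (A.le_opNorm x) hc₀)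
  calc _ ≤ (1 / 2) * |(inner (𝕜 := ℂ) (dOp (fun i => Real.cos (h * ω i)) x) (A x)).re|
          + (1 / 8) * h ^ 2 * ‖dOp (fun i => ψ₁ (h * ω i)) (A x)‖ ^ 2 := by
        refine (abs_sub _ _).trans_eq ?_
        rw [abs_mul, abs_of_nonneg (by positivity : (0 : ℝ) ≤ 1 / 8 * h ^ 2 * _)]
        norm_num
    _ ≤ (1 / 2) * (‖A‖ * (c₀ * ‖q‖) ^ 2)
          + (1 / 8) * h ^ 2 * (c₀ * (‖A‖ * (c₀ * ‖q‖))) ^ 2 := by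
        gcongr
        · exact hcos.trans (by gcongr)
        · exact hψAx.trans (by gcongr)
    _ = _ := by ring

/-- Lemma 1, first estimate: the modified energy is close to the quadratic part:
`|ℋ(q,q̇) − ½‖Ωq‖² − ½‖q̇‖²| ≤ (C̆ + Ĉh²)‖q‖²` with `C̆ = ½c₀²‖A‖`, `Ĉ = ⅛c₀⁴‖A‖²`. -/
theorem modified_energy_close_to_quadratic_part {d : ℕ} (h : ℝ) (hh0 : 0 < h) (hh1 : h ≤ 1)
    (ω : Fin d → ℝ) (hω : ∀ i, 0 ≤ ω i) (ψ₁ φ : ℝ → ℝ) (c₀ : ℝ)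
    (hψ : ∀ ξ : ℝ, |ψ₁ ξ| ≤ c₀) (hφ : ∀ ξ : ℝ, |φ ξ| ≤ c₀)
    (A : EuclideanSpace ℂ (Fin d) →L[ℂ] EuclideanSpace ℂ (Fin d))
    (hA : IsSelfAdjoint A) :
    ∀ q p : EuclideanSpace ℂ (Fin d),
      |modEnergy h ω ψ₁ φ A q p - (1 / 2) * ‖dOp ω q‖ ^ 2 - (1 / 2) * ‖p‖ ^ 2|
        ≤ ((1 / 2) * c₀ ^ 2 * ‖A‖ + (1 / 8) * c₀ ^ 4 * ‖A‖ ^ 2 * h ^ 2) * ‖q‖ ^ 2 :=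
  modified_energy_close_to_quadratic_part_general h ω ψ₁ φ c₀ hψ hφ A
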